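/- arXiv:2507.09646 — 2 statements merged into one kernel-verified Lean document; each statement's English description precedes it below -/
import Mathlib

section
/- For the constrained lifted system z_{k+1} = A·z_k with constraint Ψ(z_0) = z_{0,1}² − z_{0,3} = 0, the set of constrained solutions equals the image under Φ of the solution set of the original nonlinear system x_{k+1} = (a·x1, b·x2 − c·x1²); i.e., Φ(𝓑) = 𝓑̂_𝓚, where 𝓑 is the set of sequences x : ℕ → ℝ² satisfying the nonlinear recursion, 𝓑̂_𝓚 is the set of sequences z : ℕ → ℝ³ satisfying z_{k+1} = A·z_k and Ψ(z_0) = 0, and Φ acts pointwise on sequences. -/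
/-!
The lift `Φ` semiconjugates `f` to the linear map `A` (that is, `A (Φ x) = Φ (f x)`), and the
constraint `Ψ = 0` cuts out exactly the range of `Φ`. For any semiconjugacy, the images of
`f`-trajectories are precisely the `A`-trajectories starting in the range of `Φ`: the trajectory
from `Φ x₀` is the image of the `f`-orbit of `x₀`.
-/

open Function Set

theorem image_trajectories_of_semiconj {α β : Type*} {f : α → α} {g : β → β} {Φ : α → β}
    (h : Semiconj Φ f g) :
    (fun x : ℕ → α => fun k => Φ (x k)) '' {x | ∀ k, x (k + 1) = f (x k)} =
      {z | (∀ k, z (k + 1) = g (z k)) ∧ z 0 ∈ range Φ} := by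
  ext z
  constructor
  · rintro ⟨x, hx, rfl⟩
    exact ⟨fun k => by simp only [hx k, h.eq], x 0, rfl⟩
  · rintro ⟨hz, x₀, hx₀⟩
    have hz_iter : ∀ k, Φ (f^[k] x₀) = z k := by
      intro k
      induction k with
      | zero => exact hx₀
      | succ k ih => rw [hz, ← ih, iterate_succ_apply', h.eq]
    exact ⟨fun k => f^[k] x₀, fun k => iterate_succ_apply' f k x₀, funext hz_iter⟩

theorem quadraticLift_mulVec (a b c : ℝ) (x : Fin 2 → ℝ) :
    !![a, 0, 0; 0, b, -c; 0, 0, a ^ 2].mulVec ![x 0, x 1, x 0 ^ 2] =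
      ![a * x 0, b * x 1 - c * x 0 ^ 2, (a * x 0) ^ 2] := by
  ext i
  fin_cases i <;> simp [Matrix.mulVec, dotProduct, Fin.sum_univ_succ] <;> ring

theorem range_quadraticLift :
    range (fun x : Fin 2 → ℝ => ![x 0, x 1, x 0 ^ 2]) = {z | z 0 ^ 2 - z 2 = 0} := by
  ext z
  constructor
  · rintro ⟨x, rfl⟩
    simp
  · intro hz
    have hz2 : z 2 = z 0 ^ 2 := (sub_eq_zero.mp hz).symm
    refine ⟨![z 0, z 1], ?_⟩
    ext i
    fin_cases i <;> simp [hz2]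

/-- The set of constrained lifted solutions equals the image under `Φ` of the
solution set of the original nonlinear system: `Φ(𝓑) = 𝓑̂_𝓚`. -/
theorem constrained_behavior_equality (a b c : ℝ)
    (f : (Fin 2 → ℝ) → (Fin 2 → ℝ))
    (hf : ∀ x, f x = ![a * x 0, b * x 1 - c * (x 0) ^ 2])
    (Φ : (Fin 2 → ℝ) → (Fin 3 → ℝ))
    (hΦ : ∀ x, Φ x = ![x 0, x 1, (x 0) ^ 2])
    (A : Matrix (Fin 3) (Fin 3) ℝ)
    (hA : A = !![a, 0, 0; 0, b, -c; 0, 0, a ^ 2])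
    (Ψ : (Fin 3 → ℝ) → ℝ) (hΨ : ∀ z, Ψ z = (z 0) ^ 2 - z 2)
    (B : Set (ℕ → Fin 2 → ℝ)) (hB : B = {x | ∀ k, x (k + 1) = f (x k)})
    (BK : Set (ℕ → Fin 3 → ℝ))
    (hBK : BK = {z | (∀ k, z (k + 1) = A.mulVec (z k)) ∧ Ψ (z 0) = 0}) :
    (fun x : ℕ → Fin 2 → ℝ => fun k => Φ (x k)) '' B = BK := by
  have hsemi : Semiconj Φ f A.mulVec := fun x => by
    rw [hA, hΦ, hΦ, hf, quadraticLift_mulVec]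
    simp
  have hrange : range Φ = {z | Ψ z = 0} := by
    simp only [funext hΦ, range_quadraticLift, hΨ]
  rw [hB, hBK, image_trajectories_of_semiconj hsemi, hrange]
  rfl
end

section
/- There exists a trajectory of the lifted system z_{k+1} = A·z_k (with A as above and a,b,c nonzero) whose initial condition violates the constraint Ψ(z_0) ≠ 0 and which does not equal Φ(x) for any solution x of the original nonlinear system; hence the inclusion Φ(𝓑) ⊆ 𝓑_𝓚 of solution sets is strict. -/
/-! The constraint `Ψ` vanishes on the image of the lift `Φ`, so a trajectory of the linear
lifted system started off the constraint set `{Ψ = 0}` cannot be the lift of any sequence,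
let alone of a solution of the nonlinear system. -/

theorem ne_lift_of_constraint_ne_zero {X Z R : Type*} [Zero R] {Φ : X → Z} {Ψ : Z → R}
    (hΨΦ : ∀ x, Ψ (Φ x) = 0) {z : ℕ → Z} (hz : Ψ (z 0) ≠ 0) (x : ℕ → X) :
    (fun k => Φ (x k)) ≠ z := by
  rintro rfl
  exact hz (hΨΦ (x 0))

theorem noncompliant_trajectory_exists_general
    (f : (Fin 2 → ℝ) → (Fin 2 → ℝ))
    (Φ : (Fin 2 → ℝ) → (Fin 3 → ℝ))
    (hΦ : ∀ x, Φ x = ![x 0, x 1, (x 0) ^ 2])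
    (A : Matrix (Fin 3) (Fin 3) ℝ)
    (Ψ : (Fin 3 → ℝ) → ℝ) (hΨ : ∀ z, Ψ z = (z 0) ^ 2 - z 2) :
    ∃ z : ℕ → Fin 3 → ℝ,
      (∀ k, z (k + 1) = A.mulVec (z k)) ∧ Ψ (z 0) ≠ 0 ∧
      ∀ x : ℕ → Fin 2 → ℝ, (∀ k, x (k + 1) = f (x k)) →
        (fun k => Φ (x k)) ≠ z := by
  have hΨΦ : ∀ x, Ψ (Φ x) = 0 := fun x => by simp [hΨ, hΦ]
  have hviolated : Ψ ![0, 0, 1] ≠ 0 := by simp [hΨ]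
  exact ⟨fun k => A.mulVec^[k] ![0, 0, 1], fun k => Function.iterate_succ_apply' A.mulVec k _,
    hviolated, fun x _ => ne_lift_of_constraint_ne_zero hΨΦ hviolated x⟩

/-- There exists a trajectory of the unconstrained lifted system whose initial
condition violates the constraint `Ψ(z₀) = 0` and which is not the lift of any
solution of the original nonlinear system; hence `Φ(𝓑) ⊊ 𝓑_𝓚`. -/
theorem noncompliant_trajectory_exists (a b c : ℝ)
    (ha : a ≠ 0) (hb : b ≠ 0) (hc : c ≠ 0)
    (f : (Fin 2 → ℝ) → (Fin 2 → ℝ))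
    (hf : ∀ x, f x = ![a * x 0, b * x 1 - c * (x 0) ^ 2])
    (Φ : (Fin 2 → ℝ) → (Fin 3 → ℝ))
    (hΦ : ∀ x, Φ x = ![x 0, x 1, (x 0) ^ 2])
    (A : Matrix (Fin 3) (Fin 3) ℝ)
    (hA : A = !![a, 0, 0; 0, b, -c; 0, 0, a ^ 2])
    (Ψ : (Fin 3 → ℝ) → ℝ) (hΨ : ∀ z, Ψ z = (z 0) ^ 2 - z 2) :
    ∃ z : ℕ → Fin 3 → ℝ,
      (∀ k, z (k + 1) = A.mulVec (z k)) ∧ Ψ (z 0) ≠ 0 ∧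
      ∀ x : ℕ → Fin 2 → ℝ, (∀ k, x (k + 1) = f (x k)) →
        (fun k => Φ (x k)) ≠ z :=
  noncompliant_trajectory_exists_general f Φ hΦ A Ψ hΨ
end
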